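/- The accumulated error bound via union over subsets: if each |e_i| ≤ B for i = 1,…,m (as integers) and S ⊆ {1,…,m}, then |∑_{i∈S} e_i| ≤ mB; hence if mB < ⌊q/4⌋, the LWE decryption of every well-formed ciphertext (for any choice of x ∈ {0,1}^m and r ∈ {0,1}) is correct. -/

import Mathlib

/-!
The decryption phase `b − ⟨a, s⟩` of an encryption of `r` equals `E + r ⌊q/2⌋` in `ℤ_q`, where
`E = ∑_{i ∈ S} e_i` is the accumulated error, and `|E| ≤ ∑ |e_i| ≤ mB < ⌊q/4⌋`. So the phase lies
within `⌊q/4⌋` of `0` when `r = 0` (its representative is `E` or `E + q`), and within `⌊q/4⌋` of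
`⌊q/2⌋` when `r = 1`; the threshold quantizer reads off `r` in both cases.
-/

def Q (q : ℕ) (x : ZMod q) : ℕ :=
  if q / 4 < x.val ∧ x.val ≤ 3 * q / 4 then 1 else 0

open Finset

theorem abs_sum_le_card_nsmul_of_abs_le {ι α : Type*} [Fintype ι] [AddCommGroup α] [LinearOrder α]
    [IsOrderedAddMonoid α] {e : ι → α} {B : α} (hB : ∀ i, |e i| ≤ B) (S : Finset ι) :
    |∑ i ∈ S, e i| ≤ Fintype.card ι • B :=
  calc |∑ i ∈ S, e i| ≤ ∑ i ∈ S, |e i| := abs_sum_le_sum_abs _ _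
    _ ≤ ∑ i, |e i| := sum_le_sum_of_subset_of_nonneg (subset_univ S) fun i _ _ => abs_nonneg _
    _ ≤ ∑ _i : ι, B := sum_le_sum fun i _ => hB i
    _ = Fintype.card ι • B := by rw [sum_const, card_univ]

theorem sum_dotProduct_add_sub_dotProduct_sum {ι κ R : Type*} [Fintype κ] [CommRing R]
    (S : Finset ι) (A : ι → κ → R) (s : κ → R) (e : ι → R) (c : R) :
    (∑ i ∈ S, ((∑ j, A i j * s j) + e i) + c) - ∑ j, (∑ i ∈ S, A i j) * s j
      = ∑ i ∈ S, e i + c := by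
  rw [sum_add_distrib]
  simp_rw [sum_mul]
  rw [sum_comm (s := univ)]
  ring

namespace ZMod

theorem natCast_val_intCast_of_nonneg_of_lt {q : ℕ} [NeZero q] {z : ℤ} (h0 : 0 ≤ z)
    (hz : z < q) : ((z : ZMod q).val : ℤ) = z := by
  rw [val_intCast, Int.emod_eq_of_lt h0 hz]

end ZMod

section Quantizer

variable {q : ℕ} {E : ℤ}

theorem Q_intCast_of_nonneg_of_lt [NeZero q] {z : ℤ} (h0 : 0 ≤ z) (hz : z < q) :
    Q q (z : ZMod q) = if ((q / 4 : ℕ) : ℤ) < z ∧ z ≤ ((3 * q / 4 : ℕ) : ℤ) then 1 else 0 := by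
  have hval := ZMod.natCast_val_intCast_of_nonneg_of_lt h0 hz
  unfold Q
  congr 1
  conv_rhs => rw [← hval, Nat.cast_lt, Nat.cast_le]

theorem neZero_of_abs_lt_div_four (hE : |E| < ((q / 4 : ℕ) : ℤ)) : NeZero q :=
  ⟨by have := (abs_nonneg E).trans_lt hE; omega⟩

theorem Q_intCast_of_abs_lt (hE : |E| < ((q / 4 : ℕ) : ℤ)) : Q q (E : ZMod q) = 0 := by
  have := neZero_of_abs_lt_div_four hE
  rw [abs_lt] at hE
  rcases le_or_gt 0 E with hE0 | hE0
  · rw [Q_intCast_of_nonneg_of_lt hE0 (by omega), if_neg (by omega)]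
  · have hlift : (E : ZMod q) = ((E + q : ℤ) : ZMod q) := by simp
    rw [hlift, Q_intCast_of_nonneg_of_lt (by omega) (by omega), if_neg (by omega)]

theorem Q_intCast_add_half_of_abs_lt (hE : |E| < ((q / 4 : ℕ) : ℤ)) :
    Q q ((E : ZMod q) + ((q / 2 : ℕ) : ZMod q)) = 1 := by
  have := neZero_of_abs_lt_div_four hE
  rw [abs_lt] at hE
  have hcast : (E : ZMod q) + ((q / 2 : ℕ) : ZMod q) = ((E + (q / 2 : ℕ) : ℤ) : ZMod q) := by
    rw [Int.cast_add, Int.cast_natCast]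
  rw [hcast, Q_intCast_of_nonneg_of_lt (by omega) (by omega), if_pos (by omega)]

theorem Q_intCast_add_mul_half_of_abs_lt (hE : |E| < ((q / 4 : ℕ) : ℤ)) {r : ℕ} (hr : r ≤ 1) :
    Q q ((E : ZMod q) + (r : ZMod q) * ((q / 2 : ℕ) : ZMod q)) = r := by
  obtain rfl | rfl : r = 0 ∨ r = 1 := by omega
  · simpa using Q_intCast_of_abs_lt hE
  · simpa using Q_intCast_add_half_of_abs_lt hE

end Quantizer

theorem bounded_errors_imply_correct_decryption_general
    (q n m : ℕ)
    (s : Fin n → ZMod q) (A : Fin m → Fin n → ZMod q)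
    (e : Fin m → ℤ) (B : ℤ) (hB : ∀ i, |e i| ≤ B) :
    (∀ S : Finset (Fin m), |∑ i ∈ S, e i| ≤ (m : ℤ) * B)
    ∧ ((m : ℤ) * B < ((q / 4 : ℕ) : ℤ) →
        ∀ (x : Fin m → Bool) (r : ℕ), r ≤ 1 →
          Q q (((∑ i ∈ Finset.univ.filter (fun i => x i = true),
                  ((∑ j, A i j * s j) + (e i : ZMod q)))
                + (r : ZMod q) * ((q / 2 : ℕ) : ZMod q))
              - ∑ j, (∑ i ∈ Finset.univ.filter (fun i => x i = true), A i j) * s j) = r) := by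
  have hsum (S : Finset (Fin m)) : |∑ i ∈ S, e i| ≤ (m : ℤ) * B := by
    simpa using abs_sum_le_card_nsmul_of_abs_le hB S
  refine ⟨hsum, fun hmB x r hr => ?_⟩
  rw [sum_dotProduct_add_sub_dotProduct_sum, ← Int.cast_sum]
  exact Q_intCast_add_mul_half_of_abs_lt ((hsum _).trans_lt hmB) hr

/-- If each `|e_i| ≤ B` then for every subset `S ⊆ {1,…,m}` the accumulated
error satisfies `|∑_{i∈S} e_i| ≤ m·B`; hence if `m·B < ⌊q/4⌋`, the LWE decryption of every
well-formed ciphertext (for any randomness `x ∈ {0,1}^m` and plaintext `r ∈ {0,1}`) is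
correct. -/
theorem bounded_errors_imply_correct_decryption
    (q n m : ℕ) (hq : ∃ k : ℕ, q = 2 ^ k) (hq8 : 8 ≤ q)
    (s : Fin n → ZMod q) (A : Fin m → Fin n → ZMod q)
    (e : Fin m → ℤ) (B : ℤ) (hB : ∀ i, |e i| ≤ B) :
    (∀ S : Finset (Fin m), |∑ i ∈ S, e i| ≤ (m : ℤ) * B)
    ∧ ((m : ℤ) * B < ((q / 4 : ℕ) : ℤ) →
        ∀ (x : Fin m → Bool) (r : ℕ), r ≤ 1 →
          Q q (((∑ i ∈ Finset.univ.filter (fun i => x i = true),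
                  ((∑ j, A i j * s j) + (e i : ZMod q)))
                + (r : ZMod q) * ((q / 2 : ℕ) : ZMod q))
              - ∑ j, (∑ i ∈ Finset.univ.filter (fun i => x i = true), A i j) * s j) = r) :=
  bounded_errors_imply_correct_decryption_general q n m s A e B hB
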